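/- arXiv:2410.09572 — 2 statements merged into one kernel-verified Lean document; each statement's English description precedes it below -/
import Mathlib

section
/- For λ > 0 let v_λ be the unique positive classical solution of ε Δv = v^{1+p} in Ω with v = λ^{1/p} b on ∂Ω. Then for any 0 < λ₁ < λ₂ one has 0 ≤ v_{λ₂}(x) − v_{λ₁}(x) < (λ₂^{1/p} − λ₁^{1/p}) b for all x ∈ Ω, and moreover ∫_Ω v_{λ₁}^p dx < ∫_Ω v_{λ₂}^p dx; in particular λ ↦ ∫_Ω v_λ^p dx is continuous and strictly increasing. -/
open MeasureTheory Metric Set Filter Topology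
open scoped RealInnerProductSpace

noncomputable section

/-- Laplacian of a real-valued function on Euclidean space. -/
def lap {n : ℕ} (f : EuclideanSpace ℝ (Fin n) → ℝ) (x : EuclideanSpace ℝ (Fin n)) : ℝ :=
  ∑ i : Fin n, iteratedFDeriv ℝ 2 f x ![EuclideanSpace.single i 1, EuclideanSpace.single i 1]

/-- `v` is a positive classical solution of `ε Δv = v^{1+p}` in `Ω` with `v = c` on `∂Ω`. -/
def IsLocalSol {n : ℕ} (Ω : Set (EuclideanSpace ℝ (Fin n))) (ε p c : ℝ)
    (v : EuclideanSpace ℝ (Fin n) → ℝ) : Prop :=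
  ContinuousOn v (closure Ω) ∧ ContDiffOn ℝ 2 v Ω ∧
  (∀ x ∈ closure Ω, 0 < v x) ∧ (∀ x ∈ frontier Ω, v x = c) ∧
  ∀ x ∈ Ω, ε * lap v x = v x ^ (1 + p)

/-! The argument is the minimum principle for the Laplacian: a function that is nonnegative on
`∂Ω` and has `Δw < 0` wherever `w < 0` cannot have a negative interior minimum, since there
`Δw ≥ 0`. Because `t ↦ t^(1+p)` is increasing, `ε Δ(v₂ - v₁) = v₂^(1+p) - v₁^(1+p)` has the sign
of `v₂ - v₁`; applied to `v₂ - v₁` and to `(c₂ - c₁) - (v₂ - v₁)` this gives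
`0 ≤ v₂ - v₁ < c₂ - c₁` for boundary values `c₁ < c₂`. Near `∂Ω` the solutions are strictly
ordered, so the integrals are strictly ordered; and `|v₂ - v₁| ≤ |c₂ - c₁|` together with
`v ≤ c` gives continuity in the boundary value by dominated convergence. -/

/- A local minimum with `f'' < 0` would also be a local maximum, so `f` would be locally
constant. -/
theorem IsLocalMin.deriv_deriv_nonneg {f : ℝ → ℝ} {a : ℝ} (h : IsLocalMin f a)
    (hf : ContinuousAt f a) : 0 ≤ deriv (deriv f) a := by
  by_contra! hneg
  have hmax : IsLocalMax f a := isLocalMax_of_deriv_deriv_neg hneg h.deriv_eq_zero hf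
  have hconst : f =ᶠ[𝓝 a] fun _ => f a :=
    (h.and hmax).mono fun _ hx => le_antisymm hx.2 hx.1
  rw [hconst.deriv.deriv_eq] at hneg
  simp at hneg

theorem IsLocalMin.fderiv_fderiv_apply_nonneg {E : Type*} [NormedAddCommGroup E]
    [NormedSpace ℝ E] {f : E → ℝ} {x : E} (h : IsLocalMin f x) (hf : ContDiffAt ℝ 2 f x)
    (e : E) : 0 ≤ fderiv ℝ (fderiv ℝ f) x e e := by
  set L : ℝ → E := fun t => x + t • e
  have hL : ∀ t, HasDerivAt L e t := fun t => by
    simpa [L] using ((hasDerivAt_id t).smul_const e).const_add x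
  have hL0 : L 0 = x := by simp [L]
  have hLx : Tendsto L (𝓝 0) (𝓝 x) := hL0 ▸ (hL 0).continuousAt.tendsto
  have hderiv : deriv (f ∘ L) =ᶠ[𝓝 0] fun t => fderiv ℝ f (L t) e := by
    filter_upwards [hLx.eventually (hf.eventually (by simp))] with t ht
    exact ((ht.differentiableAt (by norm_num)).hasFDerivAt.comp_hasDerivAt t (hL t)).deriv
  have hsecond : HasDerivAt (fun t => fderiv ℝ f (L t) e) (fderiv ℝ (fderiv ℝ f) x e e) 0 := by
    have hF : HasFDerivAt (fderiv ℝ f) (fderiv ℝ (fderiv ℝ f) x) (L 0) := by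
      rw [hL0]
      exact ((hf.fderiv_right (m := 1) (by norm_num)).differentiableAt one_ne_zero).hasFDerivAt
    simpa using (hF.comp_hasDerivAt 0 (hL 0)).clm_apply (hasDerivAt_const 0 e)
  have hmin : IsLocalMin (f ∘ L) 0 := (hL0 ▸ h).comp_continuous (hL 0).continuousAt
  have := IsLocalMin.deriv_deriv_nonneg hmin (hf.continuousAt.comp_of_eq (hL 0).continuousAt hL0)
  rwa [hderiv.deriv_eq, hsecond.deriv] at this

open InnerProductSpace Laplacian

theorem IsLocalMin.laplacian_nonneg {E : Type*} [NormedAddCommGroup E] [InnerProductSpace ℝ E]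
    [FiniteDimensional ℝ E] {f : E → ℝ} {x : E} (h : IsLocalMin f x) (hf : ContDiffAt ℝ 2 f x) :
    0 ≤ Δ f x := by
  rw [laplacian_eq_iteratedFDeriv_stdOrthonormalBasis]
  exact Finset.sum_nonneg fun i _ => by
    simpa [iteratedFDeriv_two_apply] using h.fderiv_fderiv_apply_nonneg hf _

theorem lap_eq_laplacian {n : ℕ} (f : EuclideanSpace ℝ (Fin n) → ℝ) : lap f = Δ f := by
  ext x
  simp [lap, laplacian_eq_iteratedFDeriv_orthonormalBasis f (EuclideanSpace.basisFun (Fin n) ℝ)]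

section MinimumPrinciple

variable {E : Type*} [NormedAddCommGroup E] [InnerProductSpace ℝ E] [FiniteDimensional ℝ E]
  {Ω : Set E} {w : E → ℝ}

theorem nonneg_of_forall_mem_frontier_nonneg (hΩ : IsOpen Ω) (hΩb : Bornology.IsBounded Ω)
    (hwc : ContinuousOn w (closure Ω)) (hw : ContDiffOn ℝ 2 w Ω)
    (hfr : ∀ x ∈ frontier Ω, 0 ≤ w x) (hΔ : ∀ x ∈ Ω, w x < 0 → Δ w x < 0) :
    ∀ x ∈ closure Ω, 0 ≤ w x := by
  intro z hz
  obtain ⟨x, hx, hmin⟩ := hΩb.isCompact_closure.exists_isMinOn ⟨z, hz⟩ hwc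
  by_contra! hneg
  have hwx : w x < 0 := (hmin hz).trans_lt hneg
  have hxΩ : x ∈ Ω := by
    by_contra h
    exact (hfr x ⟨hx, by rwa [hΩ.interior_eq]⟩).not_gt hwx
  have hloc : IsLocalMin w x :=
    Filter.mem_of_superset (hΩ.mem_nhds hxΩ) fun y hy => hmin (subset_closure hy)
  exact (hΔ x hxΩ hwx).not_ge (hloc.laplacian_nonneg (hw.contDiffAt (hΩ.mem_nhds hxΩ)))

theorem pos_of_forall_mem_frontier_nonneg (hΩ : IsOpen Ω) (hΩb : Bornology.IsBounded Ω)
    (hwc : ContinuousOn w (closure Ω)) (hw : ContDiffOn ℝ 2 w Ω)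
    (hfr : ∀ x ∈ frontier Ω, 0 ≤ w x) (hΔ : ∀ x ∈ Ω, w x ≤ 0 → Δ w x < 0) :
    ∀ x ∈ Ω, 0 < w x := by
  have hnn := nonneg_of_forall_mem_frontier_nonneg hΩ hΩb hwc hw hfr fun x hx h => hΔ x hx h.le
  intro x hx
  by_contra! hle
  have hloc : IsLocalMin w x :=
    Filter.mem_of_superset (hΩ.mem_nhds hx) fun y hy => hle.trans (hnn y (subset_closure hy))
  exact (hΔ x hx hle).not_ge (hloc.laplacian_nonneg (hw.contDiffAt (hΩ.mem_nhds hx)))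

end MinimumPrinciple

theorem Bornology.IsBounded.nonempty_frontier {E : Type*} [NormedAddCommGroup E]
    [NormedSpace ℝ E] [Nontrivial E] {s : Set E} (hb : Bornology.IsBounded s)
    (hs : s.Nonempty) : (frontier s).Nonempty :=
  nonempty_frontier_iff.2 ⟨hs, fun h => NormedSpace.unbounded_univ ℝ E (h ▸ hb)⟩

theorem setIntegral_lt_setIntegral_of_continuousOn {X : Type*} [TopologicalSpace X]
    [MeasurableSpace X] [OpensMeasurableSpace X] {μ : Measure X} [μ.IsOpenPosMeasure]
    {s : Set X} {f g : X → ℝ} (hs : IsOpen s) (hf : ContinuousOn f s) (hg : ContinuousOn g s)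
    (hfi : IntegrableOn f s μ) (hgi : IntegrableOn g s μ) (hle : ∀ x ∈ s, f x ≤ g x)
    (hlt : ∃ x ∈ s, f x < g x) : ∫ x in s, f x ∂μ < ∫ x in s, g x ∂μ := by
  obtain ⟨x, hx, hfgx⟩ := hlt
  have hU : IsOpen (s ∩ (g - f) ⁻¹' Ioi 0) := (hg.sub hf).isOpen_inter_preimage hs isOpen_Ioi
  rw [← sub_pos, ← integral_sub hgi hfi]
  refine (setIntegral_pos_iff_support_of_nonneg_ae ?_ (hgi.sub hfi)).2 <|
    (hU.measure_pos μ ⟨x, hx, by simpa using hfgx⟩).trans_le (measure_mono ?_)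
  · exact ae_restrict_of_forall_mem hs.measurableSet fun y hy => sub_nonneg.2 (hle y hy)
  · exact fun y ⟨hy, hpos⟩ => ⟨ne_of_gt hpos, hy⟩

namespace IsLocalSol

variable {n : ℕ} {Ω : Set (EuclideanSpace ℝ (Fin n))} {ε p c c₁ c₂ : ℝ}
  {u u₁ u₂ : EuclideanSpace ℝ (Fin n) → ℝ} {x : EuclideanSpace ℝ (Fin n)}

theorem contDiffAt (h : IsLocalSol Ω ε p c u) (hΩ : IsOpen Ω) (hx : x ∈ Ω) :
    ContDiffAt ℝ 2 u x :=
  h.2.1.contDiffAt (hΩ.mem_nhds hx)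

theorem mul_laplacian_eq (h : IsLocalSol Ω ε p c u) (hx : x ∈ Ω) :
    ε * Δ u x = u x ^ (1 + p) := by
  rw [← lap_eq_laplacian]
  exact h.2.2.2.2 x hx

theorem laplacian_pos (h : IsLocalSol Ω ε p c u) (hε : 0 < ε) (hx : x ∈ Ω) : 0 < Δ u x :=
  pos_of_mul_pos_right ((h.mul_laplacian_eq hx).symm ▸
    Real.rpow_pos_of_pos (h.2.2.1 x (subset_closure hx)) _) hε.le

theorem laplacian_lt_laplacian (h₁ : IsLocalSol Ω ε p c₁ u₁) (h₂ : IsLocalSol Ω ε p c₂ u₂)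
    (hε : 0 < ε) (hp : 0 < 1 + p) (hx : x ∈ Ω) (hlt : u₁ x < u₂ x) : Δ u₁ x < Δ u₂ x := by
  refine lt_of_mul_lt_mul_left ?_ hε.le
  rw [h₁.mul_laplacian_eq hx, h₂.mul_laplacian_eq hx]
  exact Real.rpow_lt_rpow (h₁.2.2.1 x (subset_closure hx)).le hlt hp

theorem le_boundary (h : IsLocalSol Ω ε p c u) (hΩ : IsOpen Ω) (hΩb : Bornology.IsBounded Ω)
    (hε : 0 < ε) : ∀ x ∈ closure Ω, u x ≤ c := by
  have := nonneg_of_forall_mem_frontier_nonneg hΩ hΩb (w := (fun _ => c) - u)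
    (continuousOn_const.sub h.1) (contDiffOn_const.sub h.2.1)
    (fun x hx => by simp [h.2.2.2.1 x hx])
    (fun x hx _ => by
      rw [contDiffAt_const.laplacian_sub (h.contDiffAt hΩ hx), laplacian_const]
      simpa using h.laplacian_pos hε hx)
  simpa [sub_nonneg] using this

theorem le_of_le (h₁ : IsLocalSol Ω ε p c₁ u₁) (h₂ : IsLocalSol Ω ε p c₂ u₂) (hΩ : IsOpen Ω)
    (hΩb : Bornology.IsBounded Ω) (hε : 0 < ε) (hp : 0 < 1 + p) (hc : c₁ ≤ c₂) :
    ∀ x ∈ closure Ω, u₁ x ≤ u₂ x := by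
  have := nonneg_of_forall_mem_frontier_nonneg hΩ hΩb (w := u₂ - u₁)
    (h₂.1.sub h₁.1) (h₂.2.1.sub h₁.2.1)
    (fun x hx => by simp [h₁.2.2.2.1 x hx, h₂.2.2.2.1 x hx, hc])
    (fun x hx hneg => by
      rw [(h₂.contDiffAt hΩ hx).laplacian_sub (h₁.contDiffAt hΩ hx), sub_neg]
      exact h₂.laplacian_lt_laplacian h₁ hε hp hx (by simpa using hneg))
  simpa [sub_nonneg] using this

theorem sub_lt_sub_of_lt (h₁ : IsLocalSol Ω ε p c₁ u₁) (h₂ : IsLocalSol Ω ε p c₂ u₂)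
    (hΩ : IsOpen Ω) (hΩb : Bornology.IsBounded Ω) (hε : 0 < ε) (hp : 0 < 1 + p)
    (hc : c₁ < c₂) : ∀ x ∈ Ω, u₂ x - u₁ x < c₂ - c₁ := by
  have := pos_of_forall_mem_frontier_nonneg hΩ hΩb (w := (fun _ => c₂ - c₁) - (u₂ - u₁))
    (continuousOn_const.sub (h₂.1.sub h₁.1)) (contDiffOn_const.sub (h₂.2.1.sub h₁.2.1))
    (fun x hx => by simp [h₁.2.2.2.1 x hx, h₂.2.2.2.1 x hx])
    (fun x hx hle => by
      have hd : ContDiffAt ℝ 2 (u₂ - u₁) x := (h₂.contDiffAt hΩ hx).sub (h₁.contDiffAt hΩ hx)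
      rw [contDiffAt_const.laplacian_sub hd, laplacian_const,
        (h₂.contDiffAt hΩ hx).laplacian_sub (h₁.contDiffAt hΩ hx)]
      have : u₁ x < u₂ x := by simp at hle; linarith
      simpa using h₁.laplacian_lt_laplacian h₂ hε hp hx this)
  simpa [sub_pos] using this

theorem abs_sub_le (h₁ : IsLocalSol Ω ε p c₁ u₁) (h₂ : IsLocalSol Ω ε p c₂ u₂) (hΩ : IsOpen Ω)
    (hΩb : Bornology.IsBounded Ω) (hε : 0 < ε) (hp : 0 < 1 + p) :
    ∀ x ∈ Ω, |u₂ x - u₁ x| ≤ |c₂ - c₁| := by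
  wlog hc : c₁ ≤ c₂ generalizing c₁ c₂ u₁ u₂
  · intro x hx
    rw [abs_sub_comm, abs_sub_comm c₂]
    exact this h₂ h₁ (le_of_not_ge hc) x hx
  intro x hx
  have hle := h₁.le_of_le h₂ hΩ hΩb hε hp hc x (subset_closure hx)
  rcases hc.lt_or_eq with hc | rfl
  · have hlt := h₁.sub_lt_sub_of_lt h₂ hΩ hΩb hε hp hc x hx
    exact abs_le_abs (by linarith) (by linarith)
  · have hge := h₂.le_of_le h₁ hΩ hΩb hε hp le_rfl x (subset_closure hx)
    simp [le_antisymm hle hge]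

theorem exists_lt_of_lt (h₁ : IsLocalSol Ω ε p c₁ u₁) (h₂ : IsLocalSol Ω ε p c₂ u₂)
    (hfr : (frontier Ω).Nonempty) (hc : c₁ < c₂) : ∃ x ∈ Ω, u₁ x < u₂ x := by
  obtain ⟨y, hy⟩ := hfr
  have hwy : (u₂ - u₁) y ∈ Ioi 0 := by simp [h₁.2.2.2.1 y hy, h₂.2.2.2.1 y hy, hc]
  have hcl := ((h₂.1.sub h₁.1) y (frontier_subset_closure hy)).mono subset_closure
  obtain ⟨_, hpos, x, hx, rfl⟩ :=
    mem_closure_iff.1 (hcl.mem_closure_image (frontier_subset_closure hy)) _ isOpen_Ioi hwy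
  exact ⟨x, hx, by simpa using hpos⟩

theorem integrableOn_rpow (h : IsLocalSol Ω ε p c u) (hΩb : Bornology.IsBounded Ω)
    (hp : 0 ≤ p) : IntegrableOn (fun x => u x ^ p) Ω :=
  ((h.1.rpow_const fun _ _ => Or.inr hp).integrableOn_compact hΩb.isCompact_closure).mono_set
    subset_closure

theorem setIntegral_rpow_lt (h₁ : IsLocalSol Ω ε p c₁ u₁) (h₂ : IsLocalSol Ω ε p c₂ u₂)
    (hΩ : IsOpen Ω) (hΩb : Bornology.IsBounded Ω) (hfr : (frontier Ω).Nonempty) (hε : 0 < ε)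
    (hp : 0 < p) (hc : c₁ < c₂) : ∫ x in Ω, u₁ x ^ p < ∫ x in Ω, u₂ x ^ p := by
  have hp' : 0 < 1 + p := by linarith
  obtain ⟨x₀, hx₀, hlt⟩ := h₁.exists_lt_of_lt h₂ hfr hc
  refine setIntegral_lt_setIntegral_of_continuousOn hΩ
    ((h₁.1.rpow_const fun _ _ => Or.inr hp.le).mono subset_closure)
    ((h₂.1.rpow_const fun _ _ => Or.inr hp.le).mono subset_closure)
    (h₁.integrableOn_rpow hΩb hp.le) (h₂.integrableOn_rpow hΩb hp.le) (fun x hx => ?_)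
    ⟨x₀, hx₀, Real.rpow_lt_rpow (h₁.2.2.1 x₀ (subset_closure hx₀)).le hlt hp⟩
  exact Real.rpow_le_rpow (h₁.2.2.1 x (subset_closure hx)).le
    (h₁.le_of_le h₂ hΩ hΩb hε hp' hc.le x (subset_closure hx)) hp.le

end IsLocalSol

theorem continuousOn_setIntegral_rpow_of_isLocalSol {n : ℕ} {Ω : Set (EuclideanSpace ℝ (Fin n))}
    {ε p : ℝ} {ι : Type*} [TopologicalSpace ι] [FirstCountableTopology ι] {s : Set ι} {c : ι → ℝ}
    {v : ι → EuclideanSpace ℝ (Fin n) → ℝ} (hΩ : IsOpen Ω) (hΩb : Bornology.IsBounded Ω)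
    (hε : 0 < ε) (hp : 0 < p) (hc : ContinuousOn c s)
    (hv : ∀ t ∈ s, IsLocalSol Ω ε p (c t) (v t)) :
    ContinuousOn (fun t => ∫ x in Ω, v t x ^ p) s := by
  intro t₀ ht₀
  have hcont := hc t₀ ht₀
  refine continuousWithinAt_of_dominated (bound := fun _ => (c t₀ + 1) ^ p) ?_ ?_
    (integrableOn_const hΩb.measure_lt_top.ne) ?_
  · filter_upwards [self_mem_nhdsWithin] with t ht
    exact (((hv t ht).1.rpow_const fun _ _ => Or.inr hp.le).mono subset_closure)
      |>.aestronglyMeasurable hΩ.measurableSet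
  · filter_upwards [self_mem_nhdsWithin, hcont.eventually (gt_mem_nhds (lt_add_one _))]
      with t ht hct
    refine ae_restrict_of_forall_mem hΩ.measurableSet fun x hx => ?_
    have hpos := (hv t ht).2.2.1 x (subset_closure hx)
    rw [Real.norm_of_nonneg (Real.rpow_nonneg hpos.le p)]
    exact Real.rpow_le_rpow hpos.le
      (((hv t ht).le_boundary hΩ hΩb hε x (subset_closure hx)).trans hct.le) hp.le
  · refine ae_restrict_of_forall_mem hΩ.measurableSet fun x hx => ?_
    have hvx : Tendsto (fun t => v t x) (𝓝[s] t₀) (𝓝 (v t₀ x)) := by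
      rw [tendsto_iff_norm_sub_tendsto_zero]
      refine squeeze_zero_norm' ?_ (tendsto_iff_norm_sub_tendsto_zero.1 hcont)
      filter_upwards [self_mem_nhdsWithin] with t ht
      simpa using (hv t₀ ht₀).abs_sub_le (hv t ht) hΩ hΩb hε (by linarith) x hx
    exact ((Real.continuousAt_rpow_const _ p (Or.inr hp.le)).tendsto).comp hvx

/-- for the family `v_λ` of positive solutions of `ε Δv = v^{1+p}` with boundary
value `λ^{1/p} b`, one has `0 ≤ v_{λ₂} − v_{λ₁} < (λ₂^{1/p} − λ₁^{1/p}) b` in `Ω` for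
`0 < λ₁ < λ₂`, the integrals `∫_Ω v_λ^p` are strictly increasing in `λ`, and the map
`λ ↦ ∫_Ω v_λ^p` is continuous and strictly increasing on `(0,∞)`. -/
theorem statement_4
    {n : ℕ} (hn : 1 ≤ n)
    (Ω : Set (EuclideanSpace ℝ (Fin n)))
    (hΩopen : IsOpen Ω) (hΩbdd : Bornology.IsBounded Ω) (hΩne : Ω.Nonempty)
    (ε b p : ℝ) (hε : 0 < ε) (hb : 0 < b) (hp : 0 < p)
    (v : ℝ → EuclideanSpace ℝ (Fin n) → ℝ)
    (hv : ∀ lam, 0 < lam → IsLocalSol Ω ε p (lam ^ (1 / p) * b) (v lam)) :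
    (∀ lam₁ lam₂, 0 < lam₁ → lam₁ < lam₂ →
      ∀ x ∈ Ω, 0 ≤ v lam₂ x - v lam₁ x ∧
        v lam₂ x - v lam₁ x < (lam₂ ^ (1 / p) - lam₁ ^ (1 / p)) * b) ∧
    (∀ lam₁ lam₂, 0 < lam₁ → lam₁ < lam₂ →
      (∫ x in Ω, v lam₁ x ^ p) < ∫ x in Ω, v lam₂ x ^ p) ∧
    ContinuousOn (fun lam => ∫ x in Ω, v lam x ^ p) (Set.Ioi 0) ∧
    StrictMonoOn (fun lam => ∫ x in Ω, v lam x ^ p) (Set.Ioi 0) := by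
  have hfr : (frontier Ω).Nonempty :=
    haveI : Nonempty (Fin n) := ⟨⟨0, hn⟩⟩
    hΩbdd.nonempty_frontier hΩne
  have hp' : 0 < 1 + p := by linarith
  have hc : ∀ lam₁ lam₂, 0 < lam₁ → lam₁ < lam₂ → lam₁ ^ (1 / p) * b < lam₂ ^ (1 / p) * b :=
    fun _ _ h₁ h₁₂ => mul_lt_mul_of_pos_right (Real.rpow_lt_rpow h₁.le h₁₂ (by positivity)) hb
  have hmono : ∀ lam₁ lam₂, 0 < lam₁ → lam₁ < lam₂ →
      (∫ x in Ω, v lam₁ x ^ p) < ∫ x in Ω, v lam₂ x ^ p := fun lam₁ lam₂ h₁ h₁₂ =>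
    (hv lam₁ h₁).setIntegral_rpow_lt (hv lam₂ (h₁.trans h₁₂)) hΩopen hΩbdd hfr hε hp
      (hc lam₁ lam₂ h₁ h₁₂)
  refine ⟨fun lam₁ lam₂ h₁ h₁₂ x hx => ⟨?_, ?_⟩, hmono, ?_,
    fun lam₁ h₁ lam₂ _ h₁₂ => hmono lam₁ lam₂ h₁ h₁₂⟩
  · exact sub_nonneg.2 <| (hv lam₁ h₁).le_of_le (hv lam₂ (h₁.trans h₁₂)) hΩopen hΩbdd hε hp'
      (hc lam₁ lam₂ h₁ h₁₂).le x (subset_closure hx)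
  · rw [sub_mul]
    exact (hv lam₁ h₁).sub_lt_sub_of_lt (hv lam₂ (h₁.trans h₁₂)) hΩopen hΩbdd hε hp'
      (hc lam₁ lam₂ h₁ h₁₂) x hx
  · refine continuousOn_setIntegral_rpow_of_isLocalSol hΩopen hΩbdd hε hp ?_ hv
    exact (continuousOn_id.rpow_const fun x hx => Or.inl (ne_of_gt hx)).mul continuousOn_const
end
end

section
/- Let v_ε ∈ C^∞(closure Ω) be the unique positive solution of ε Δv = v^{1+p} in Ω with v = b on ∂Ω. Then for any compact subset K ⊂ Ω there exists a positive constant C_K, independent of ε, such that for all sufficiently small ε > 0 one has max_{x ∈ K} v_ε(x) ≤ C_K ε^{1/p}. -/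
open MeasureTheory Metric Set Filter Topology
open scoped RealInnerProductSpace

noncomputable section

lemma slice_deriv {n : ℕ} {f : EuclideanSpace ℝ (Fin n) → ℝ}
    {y a : EuclideanSpace ℝ (Fin n)} (hf : ContDiffAt ℝ 2 f y) :
    (∀ᶠ t in 𝓝 (0:ℝ), DifferentiableAt ℝ (fun t : ℝ => f (y + t • a)) t) ∧
    HasDerivAt (deriv (fun t : ℝ => f (y + t • a)))
      (iteratedFDeriv ℝ 2 f y ![a, a]) 0 := by
  have hev : ∀ᶠ x in 𝓝 y, ContDiffAt ℝ 2 f x := hf.eventually (by simp)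
  have hline : ∀ t : ℝ, HasDerivAt (fun t : ℝ => y + t • a) a t := by
    intro t
    simpa using ((hasDerivAt_id t).smul_const a).const_add y
  have hcont : Continuous (fun t : ℝ => y + t • a) := by continuity
  have hmap : Tendsto (fun t : ℝ => y + t • a) (𝓝 0) (𝓝 y) := by
    have := hcont.tendsto 0
    simpa using this
  have hevt : ∀ᶠ t : ℝ in 𝓝 0, ContDiffAt ℝ 2 f (y + t • a) := hmap.eventually hev
  have hdiff : ∀ᶠ t : ℝ in 𝓝 0, HasDerivAt (fun t : ℝ => f (y + t • a))
      (fderiv ℝ f (y + t • a) a) t := by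
    filter_upwards [hevt] with t ht
    exact (ht.differentiableAt two_ne_zero).hasFDerivAt.comp_hasDerivAt t (hline t)
  have hdiff' : ∀ᶠ t in 𝓝 (0:ℝ), DifferentiableAt ℝ (fun t : ℝ => f (y + t • a)) t := by
    filter_upwards [hdiff] with t ht using ht.differentiableAt
  refine ⟨hdiff', ?_⟩
  have heq : deriv (fun t : ℝ => f (y + t • a)) =ᶠ[𝓝 0]
      fun t => fderiv ℝ f (y + t • a) a := by
    filter_upwards [hdiff] with t ht using ht.deriv
  have hd2 : DifferentiableAt ℝ (fderiv ℝ f) y :=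
    (hf.fderiv_right (by norm_num) : ContDiffAt ℝ 1 (fderiv ℝ f) y).differentiableAt one_ne_zero
  have h1 : HasDerivAt (fun t : ℝ => fderiv ℝ f (y + t • a))
      (fderiv ℝ (fderiv ℝ f) y a) 0 := by
    have hd2' : HasFDerivAt (fderiv ℝ f) (fderiv ℝ (fderiv ℝ f) y) (y + (0:ℝ) • a) := by
      rw [show y + (0:ℝ) • a = y by simp]
      exact hd2.hasFDerivAt
    have := hd2'.comp_hasDerivAt 0 (hline 0)
    exact this
  have h2 : HasDerivAt (fun t : ℝ => fderiv ℝ f (y + t • a) a)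
      (fderiv ℝ (fderiv ℝ f) y a a) 0 := by
    have := h1.clm_apply (hasDerivAt_const 0 a)
    simpa using this
  have := h2.congr_of_eventuallyEq heq
  rw [iteratedFDeriv_two_apply]
  simpa using this

lemma deriv2_nonpos_of_isLocalMax {g : ℝ → ℝ} {c : ℝ}
    (hg : ∀ᶠ t in 𝓝 (0:ℝ), DifferentiableAt ℝ g t)
    (hc : HasDerivAt (deriv g) c 0) (hmax : IsLocalMax g 0) : c ≤ 0 := by
  by_contra hpos
  push_neg at hpos
  have h0 : deriv g 0 = 0 := hmax.deriv_eq_zero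
  have hslope : Tendsto (fun t => deriv g t / t) (𝓝[≠] 0) (𝓝 c) := by
    have h1 := hasDerivAt_iff_tendsto_slope.mp hc
    have h2 : (fun t => deriv g t / t) = slope (deriv g) 0 := by
      funext t; simp [slope_def_field, h0]
    rw [h2]; exact h1
  have hev : ∀ᶠ t in 𝓝[≠] (0:ℝ), 0 < deriv g t / t :=
    hslope.eventually (eventually_gt_nhds hpos)
  have hev' : ∀ᶠ t in 𝓝[>] (0:ℝ),
      0 < deriv g t ∧ DifferentiableAt ℝ g t ∧ g t ≤ g 0 := by
    have h1 : ∀ᶠ t in 𝓝[>] (0:ℝ), 0 < deriv g t / t :=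
      hev.filter_mono (nhdsWithin_mono _ (fun x hx => ne_of_gt hx))
    have h2 : ∀ᶠ t in 𝓝[>] (0:ℝ), DifferentiableAt ℝ g t :=
      hg.filter_mono nhdsWithin_le_nhds
    have h3 : ∀ᶠ t in 𝓝[>] (0:ℝ), g t ≤ g 0 :=
      hmax.filter_mono nhdsWithin_le_nhds
    filter_upwards [h1, h2, h3, self_mem_nhdsWithin] with t ht1 ht2 ht3 ht4
    refine ⟨?_, ht2, ht3⟩
    have ht : (0:ℝ) < t := ht4
    have := mul_pos ht1 ht
    rwa [div_mul_cancel₀ _ (ne_of_gt ht)] at this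
  obtain ⟨δ, hδmem, hδ⟩ := mem_nhdsGT_iff_exists_Ioc_subset.mp hev'
  have hδ0 : (0:ℝ) < δ := hδmem
  have hmono : StrictMonoOn g (Icc 0 δ) := by
    apply strictMonoOn_of_deriv_pos (convex_Icc 0 δ)
    · intro t ht
      rcases eq_or_lt_of_le ht.1 with h | h
      · subst h
        exact (hg.self_of_nhds).continuousAt.continuousWithinAt
      · exact ((hδ ⟨h, ht.2⟩).2.1.continuousAt).continuousWithinAt
    · intro t ht
      rw [interior_Icc] at ht
      exact (hδ ⟨ht.1, ht.2.le⟩).1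
  have : g 0 < g δ := hmono ⟨le_rfl, hδ0.le⟩ ⟨hδ0.le, le_rfl⟩ hδ0
  exact absurd ((hδ ⟨hδ0, le_rfl⟩).2.2) (not_le_of_gt this)

lemma norm_add_single_sq {n : ℕ} (z : EuclideanSpace ℝ (Fin n)) (i : Fin n) (t : ℝ) :
    ‖z + t • EuclideanSpace.single i (1:ℝ)‖^2 = ‖z‖^2 + 2 * (z i) * t + t^2 := by
  rw [norm_add_sq_real, real_inner_smul_right]
  have h1 : (inner ℝ z (EuclideanSpace.single i (1:ℝ)) : ℝ) = z i := by
    rw [EuclideanSpace.inner_single_right]; simp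
  rw [h1, norm_smul, EuclideanSpace.norm_single]
  simp only [norm_one, Real.norm_eq_abs, mul_one, mul_pow, sq_abs]
  ring

lemma norm_sq_eq_sum {n : ℕ} (z : EuclideanSpace ℝ (Fin n)) :
    ‖z‖^2 = ∑ i, (z i)^2 := by
  rw [EuclideanSpace.norm_eq, Real.sq_sqrt]
  · simp [Real.norm_eq_abs, sq_abs]
  · positivity

/-- second derivative of the barrier slice `t ↦ C * (R2 - (s0 + 2 m t + t²))^(-q)`. -/
lemma barrier_slice {C q R2 s0 m : ℝ} (hq : 0 < q) (hs : s0 < R2) :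
    (∀ᶠ t in 𝓝 (0:ℝ),
      DifferentiableAt ℝ (fun t : ℝ => C * (R2 - (s0 + 2*m*t + t^2)) ^ (-q)) t) ∧
    HasDerivAt (deriv (fun t : ℝ => C * (R2 - (s0 + 2*m*t + t^2)) ^ (-q)))
      (C * q * ((q+1) * (R2 - s0) ^ (-q-2) * (2*m)^2 + (R2 - s0) ^ (-q-1) * 2)) 0 := by
  set ψ : ℝ → ℝ := fun t => R2 - (s0 + 2*m*t + t^2) with hψdef
  have hψc : Continuous ψ := by fun_prop
  have hψ0 : ψ 0 = R2 - s0 := by simp [hψdef]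
  have hψ0pos : 0 < ψ 0 := by rw [hψ0]; linarith
  have hψpos : ∀ᶠ t in 𝓝 (0:ℝ), 0 < ψ t :=
    (hψc.continuousAt).eventually (eventually_gt_nhds hψ0pos)
  have hψd : ∀ t : ℝ, HasDerivAt ψ (-(2*m + 2*t)) t := by
    intro t
    have h1 : HasDerivAt (fun t : ℝ => s0 + 2*m*t + t^2) (2*m + 2*t) t := by
      have ha : HasDerivAt (fun t : ℝ => s0 + 2*m*t) (2*m) t := by
        simpa using ((hasDerivAt_id t).const_mul (2*m)).const_add s0
      have hb : HasDerivAt (fun t : ℝ => t^2) (2*t) t := by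
        simpa using hasDerivAt_pow 2 t
      exact ha.add hb
    simpa using h1.const_sub R2
  -- derivative formula, valid wherever ψ > 0
  have hG : ∀ t : ℝ, 0 < ψ t → HasDerivAt (fun t : ℝ => C * (ψ t) ^ (-q))
      (C * (-q * (ψ t) ^ (-q-1) * -(2*m + 2*t))) t := by
    intro t ht
    have h2 : HasDerivAt (fun x : ℝ => x ^ (-q)) (-q * (ψ t) ^ (-q-1)) (ψ t) :=
      Real.hasDerivAt_rpow_const (Or.inl (ne_of_gt ht))
    exact ((h2.comp t (hψd t))).const_mul C
  have hdiff : ∀ᶠ t in 𝓝 (0:ℝ),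
      DifferentiableAt ℝ (fun t : ℝ => C * (ψ t) ^ (-q)) t := by
    filter_upwards [hψpos] with t ht using (hG t ht).differentiableAt
  refine ⟨hdiff, ?_⟩
  have heq : deriv (fun t : ℝ => C * (ψ t) ^ (-q)) =ᶠ[𝓝 0]
      fun t => (C * q) * ((ψ t) ^ (-q-1) * (2*m + 2*t)) := by
    filter_upwards [hψpos] with t ht
    rw [(hG t ht).deriv]; ring
  -- differentiate the first-derivative formula at 0
  have h3 : HasDerivAt (fun t : ℝ => (ψ t) ^ (-q-1))
      ((-q-1) * (ψ 0) ^ (-q-1-1) * -(2*m + 2*0)) 0 := by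
    have h2 : HasDerivAt (fun x : ℝ => x ^ (-q-1)) ((-q-1) * (ψ 0) ^ (-q-1-1)) (ψ 0) :=
      Real.hasDerivAt_rpow_const (Or.inl (ne_of_gt hψ0pos))
    exact h2.comp 0 (hψd 0)
  have h4 : HasDerivAt (fun t : ℝ => 2*m + 2*t) 2 0 := by
    simpa using ((hasDerivAt_id (0:ℝ)).const_mul 2).const_add (2*m)
  have h5 := ((h3.mul h4).const_mul (C * q)).congr_of_eventuallyEq heq
  convert h5 using 1
  · rfl
  · rfl
  rw [hψ0]
  have he : -q - 1 - 1 = -q - 2 := by ring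
  rw [he]
  ring

lemma key_estimate {n : ℕ} {Ω : Set (EuclideanSpace ℝ (Fin n))} (hΩopen : IsOpen Ω)
    {ε p b : ℝ} (hε : 0 < ε) (hp : 0 < p)
    {v : EuclideanSpace ℝ (Fin n) → ℝ} (hsol : IsLocalSol Ω ε p b v)
    {x₀ : EuclideanSpace ℝ (Fin n)} {R : ℝ} (hR : 0 < R)
    (hball : closedBall x₀ R ⊆ Ω) :
    v x₀ ≤ (max 1 ((2/p * R^2 * (4*(2/p)+4+2*n)) ^ (1/p))) * (R^2) ^ (-(2/p)) * ε ^ (1/p) := by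
  obtain ⟨hvc, hvC2, hvpos, _hvbd, hpde⟩ := hsol
  set q : ℝ := 2/p with hqdef
  have hq : 0 < q := by positivity
  set S : ℝ := q * R^2 * (4*q+4+2*(n:ℝ)) with hSdef
  have hS : 0 ≤ S := by positivity
  set A : ℝ := max 1 (S ^ (1/p)) with hAdef
  have hA1 : (1:ℝ) ≤ A := le_max_left _ _
  have hA0 : (0:ℝ) < A := lt_of_lt_of_le one_pos hA1
  have hAp : S ≤ A ^ p := by
    have h1 : (S ^ (1/p)) ^ p = S := by
      rw [← Real.rpow_mul hS, one_div_mul_cancel hp.ne', Real.rpow_one]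
    calc S = (S ^ (1/p)) ^ p := h1.symm
      _ ≤ A ^ p := Real.rpow_le_rpow (Real.rpow_nonneg hS _) (le_max_right _ _) hp.le
  set cε : ℝ := ε ^ (1/p) with hcεdef
  have hcε : 0 < cε := Real.rpow_pos_of_pos hε _
  set W : EuclideanSpace ℝ (Fin n) → ℝ :=
    fun x => cε * A * (R^2 - ‖x - x₀‖^2) ^ (-q) with hWdef
  -- maximum of v on the closed ball
  have hsubcl : closedBall x₀ R ⊆ closure Ω := hball.trans subset_closure
  have hcv : ContinuousOn v (closedBall x₀ R) := hvc.mono hsubcl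
  obtain ⟨xM, hxM, hxMmax⟩ := (isCompact_closedBall x₀ R).exists_isMaxOn
    ⟨x₀, mem_closedBall_self hR.le⟩ hcv
  set M : ℝ := v xM with hMdef
  have hM0 : 0 < M := hvpos xM (hsubcl hxM)
  have hMv : ∀ x ∈ closedBall x₀ R, v x ≤ M := fun x hx => (isMaxOn_iff.mp hxMmax) x hx
  -- choice of the comparison radius
  set δ : ℝ := min (R^2) ((cε*A/M) ^ (1/q)) with hδdef
  have hδpos : 0 < δ := by
    apply lt_min (by positivity)
    exact Real.rpow_pos_of_pos (by positivity) _
  have hδR : δ ≤ R^2 := min_le_left _ _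
  have hMW : M ≤ cε * A * δ ^ (-q) := by
    have h1 : δ ^ q ≤ cε*A/M := by
      have h2 : ((cε*A/M) ^ (1/q)) ^ q = cε*A/M := by
        rw [← Real.rpow_mul (by positivity), one_div_mul_cancel hq.ne', Real.rpow_one]
      calc δ ^ q ≤ ((cε*A/M) ^ (1/q)) ^ q :=
            Real.rpow_le_rpow hδpos.le (min_le_right _ _) hq.le
        _ = cε*A/M := h2
    have hδq : 0 < δ ^ q := Real.rpow_pos_of_pos hδpos q
    rw [Real.rpow_neg hδpos.le]
    rw [le_div_iff₀ hM0] at h1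
    calc M = (δ ^ q * M) * (δ ^ q)⁻¹ := by field_simp
      _ ≤ (cε*A) * (δ^q)⁻¹ := by
          apply mul_le_mul_of_nonneg_right h1 (by positivity)
      _ = cε * A * (δ^q)⁻¹ := by ring
  set r : ℝ := Real.sqrt (R^2 - δ) with hrdef
  have hr2 : r^2 = R^2 - δ := Real.sq_sqrt (by linarith)
  have hr0 : 0 ≤ r := Real.sqrt_nonneg _
  have hrR : r < R := by
    nlinarith [hr2, hδpos, hr0]
  have hrsub : closedBall x₀ r ⊆ closedBall x₀ R := closedBall_subset_closedBall hrR.le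
  -- continuity of W on the small ball
  have hbasepos : ∀ x ∈ closedBall x₀ r, 0 < R^2 - ‖x - x₀‖^2 := by
    intro x hx
    have h1 : ‖x - x₀‖ ≤ r := by rwa [mem_closedBall, dist_eq_norm] at hx
    have h2 : ‖x-x₀‖^2 ≤ r^2 := pow_le_pow_left₀ (norm_nonneg _) h1 2
    rw [hr2] at h2; linarith
  have hWc : ContinuousOn W (closedBall x₀ r) := by
    apply ContinuousOn.mul continuousOn_const
    apply ContinuousOn.rpow_const
    · fun_prop
    · exact fun x hx => Or.inl (hbasepos x hx).ne'
  have hhc : ContinuousOn (fun x => v x - W x) (closedBall x₀ r) :=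
    (hcv.mono hrsub).sub hWc
  obtain ⟨y, hy, hymax⟩ := (isCompact_closedBall x₀ r).exists_isMaxOn
    ⟨x₀, mem_closedBall_self hr0⟩ hhc
  -- shell estimate
  have hshell : ∀ x ∈ closedBall x₀ r, ‖x - x₀‖ = r → v x - W x ≤ 0 := by
    intro x hx hxr
    have hWx : M ≤ W x := by
      rw [hWdef]
      simp only
      rw [hxr, hr2, show R^2 - (R^2 - δ) = δ by ring]
      exact hMW
    have hvx : v x ≤ M := hMv x (hrsub hx)
    linarith
  have hgoal_of : v x₀ - W x₀ ≤ 0 → v x₀ ≤ A * (R^2) ^ (-q) * cε := by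
    intro h
    have hWx₀ : W x₀ = cε * A * (R^2) ^ (-q) := by
      rw [hWdef]; simp
    nlinarith [hWx₀]
  rcases le_or_gt (v y - W y) 0 with hy0 | hy0
  · have h1 := (isMaxOn_iff.mp hymax) x₀ (mem_closedBall_self hr0)
    exact hgoal_of (by linarith)
  · exfalso
    -- y is an interior maximum with v y > W y; derive a contradiction
    have hyr : ‖y - x₀‖ < r := by
      have h1 : ‖y - x₀‖ ≤ r := by rwa [mem_closedBall, dist_eq_norm] at hy
      rcases lt_or_eq_of_le h1 with h | h
      · exact h
      · exact absurd (hshell y hy h) (not_le_of_gt hy0)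
    have hyΩ : y ∈ Ω := hball (hrsub hy)
    have hcbnhds : closedBall x₀ r ∈ 𝓝 y := by
      apply Filter.mem_of_superset (isOpen_ball.mem_nhds ?_) ball_subset_closedBall
      rwa [mem_ball, dist_eq_norm]
    have hlocmax : IsLocalMax (fun x => v x - W x) y := hymax.isLocalMax hcbnhds
    set z : EuclideanSpace ℝ (Fin n) := y - x₀ with hzdef
    set s0 : ℝ := ‖z‖^2 with hs0def
    have hs0 : 0 ≤ s0 := by positivity
    have hs0R : s0 < R^2 := by
      have h2 : ‖z‖^2 < r^2 := by
        apply pow_lt_pow_left₀ hyr (norm_nonneg _) two_ne_zero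
      rw [hr2] at h2
      rw [hs0def]; linarith
    set d : ℝ := R^2 - s0 with hddef
    have hd : 0 < d := by rw [hddef]; linarith
    have hvy : 0 < v y := hvpos y (subset_closure hyΩ)
    have hWy : W y = cε * A * d ^ (-q) := by rw [hWdef]
    have hWypos : 0 < W y := by
      rw [hWy]
      have := Real.rpow_pos_of_pos hd (-q)
      positivity
    -- pointwise second-derivative comparison in each coordinate direction
    have hkey : ∀ i : Fin n,
        iteratedFDeriv ℝ 2 v y ![EuclideanSpace.single i 1, EuclideanSpace.single i 1]
          ≤ cε*A * q * ((q+1) * d ^ (-q-2) * (2*(z i))^2 + d ^ (-q-1) * 2) := by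
      intro i
      set e : EuclideanSpace ℝ (Fin n) := EuclideanSpace.single i (1:ℝ) with hedef
      have hvC2at : ContDiffAt ℝ 2 v y := hvC2.contDiffAt (hΩopen.mem_nhds hyΩ)
      obtain ⟨hvdiff, hvd2⟩ := slice_deriv (a := e) hvC2at
      obtain ⟨hWdiff, hWd2⟩ := barrier_slice (C := cε*A) (R2 := R^2) (s0 := s0)
        (m := z i) hq hs0R
      have hWs : (fun t : ℝ => W (y + t • e)) =
          fun t : ℝ => (cε*A) * (R^2 - (s0 + 2*(z i)*t + t^2)) ^ (-q) := by
        funext t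
        rw [hWdef]
        simp only
        congr 2
        rw [show y + t • e - x₀ = z + t • e by rw [hzdef]; abel,
          hedef, norm_add_single_sq, hs0def]
      rw [← hWs] at hWdiff hWd2
      -- slice of v - W
      set g : ℝ → ℝ := fun t => v (y + t • e) - W (y + t • e) with hgdef
      have hgdiff : ∀ᶠ t in 𝓝 (0:ℝ), DifferentiableAt ℝ g t := by
        filter_upwards [hvdiff, hWdiff] with t h1 h2 using h1.sub h2
      have heq : deriv g =ᶠ[𝓝 0] fun t =>
          deriv (fun t : ℝ => v (y + t • e)) t - deriv (fun t : ℝ => W (y + t • e)) t := by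
        filter_upwards [hvdiff, hWdiff] with t h1 h2
        exact deriv_sub h1 h2
      have hD : HasDerivAt (deriv g)
          (iteratedFDeriv ℝ 2 v y ![e, e]
            - cε*A * q * ((q+1) * d ^ (-q-2) * (2*(z i))^2 + d ^ (-q-1) * 2)) 0 := by
        have := (hvd2.sub hWd2)
        exact this.congr_of_eventuallyEq heq
      have hmax_g : IsLocalMax g 0 := by
        have hct : Continuous (fun t : ℝ => y + t • e) :=
          continuous_const.add (continuous_id.smul continuous_const)
        have hmapt : Tendsto (fun t : ℝ => y + t • e) (𝓝 0) (𝓝 y) := by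
          have h := hct.tendsto 0
          simpa using h
        have hevmax := hmapt.eventually hlocmax
        have hg0 : y + (0:ℝ) • e = y := by simp
        filter_upwards [hevmax] with t ht
        show v (y + t • e) - W (y + t • e) ≤ v (y + (0:ℝ) • e) - W (y + (0:ℝ) • e)
        rw [hg0]
        exact ht
      have := deriv2_nonpos_of_isLocalMax hgdiff hD hmax_g
      linarith
    -- sum over coordinates
    have hzsum : ∑ i, (2 * z i)^2 = 4 * s0 := by
      have h1 := norm_sq_eq_sum z
      simp only [mul_pow]
      rw [← Finset.mul_sum, ← h1, hs0def]
      norm_num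
    have hlap : lap v y ≤ cε*A*q*((q+1)*d^(-q-2)*(4*s0) + d^(-q-1)*(2*n)) := by
      rw [lap]
      calc ∑ i : Fin n, iteratedFDeriv ℝ 2 v y ![EuclideanSpace.single i 1, EuclideanSpace.single i 1]
          ≤ ∑ i : Fin n, cε*A * q * ((q+1) * d ^ (-q-2) * (2*(z i))^2 + d ^ (-q-1) * 2) :=
            Finset.sum_le_sum (fun i _ => hkey i)
        _ = cε*A*q*((q+1)*d^(-q-2)*(4*s0) + d^(-q-1)*(2*n)) := by
            have hsplit : ∀ i : Fin n,
                cε*A * q * ((q+1) * d ^ (-q-2) * (2*(z i))^2 + d ^ (-q-1) * 2)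
                = (cε*A*q*(q+1)*d^(-q-2)) * (2*(z i))^2 + cε*A*q*d^(-q-1)*2 :=
              fun i => by ring
            rw [Finset.sum_congr rfl (fun i _ => hsplit i), Finset.sum_add_distrib,
              ← Finset.mul_sum, hzsum, Finset.sum_const, Finset.card_univ, Fintype.card_fin,
              nsmul_eq_mul]
            ring
    -- the PDE and the barrier supersolution property give v y ≤ W y
    have hpdey : ε * lap v y = v y ^ (1+p) := hpde y hyΩ
    have hd2pos : (0:ℝ) < d ^ (-q-2) := Real.rpow_pos_of_pos hd _
    have hd1split : d ^ (-q-1) = d * d ^ (-q-2) := by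
      rw [show -q-1 = 1 + (-q-2) by ring, Real.rpow_add hd, Real.rpow_one]
    have hqp : q * p = 2 := by rw [hqdef]; field_simp
    have hWpow : W y ^ (1+p) = ε * cε * (A * A^p) * d ^ (-q-2) := by
      rw [hWy, Real.mul_rpow (by positivity) (Real.rpow_nonneg hd.le _),
        Real.mul_rpow hcε.le hA0.le]
      have h1 : (d ^ (-q)) ^ (1+p) = d ^ (-q-2) := by
        rw [← Real.rpow_mul hd.le, show (-q)*(1+p) = -q - q*p by ring, hqp]
      have h2 : cε ^ (1+p) = ε * cε := by
        rw [hcεdef, ← Real.rpow_mul hε.le, show (1/p)*(1+p) = 1 + 1/p by rw [mul_add, mul_one, one_div_mul_cancel hp.ne']; ring,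
          Real.rpow_add hε, Real.rpow_one]
      have h3 : A ^ (1+p) = A * A^p := by
        rw [Real.rpow_add hA0, Real.rpow_one]
      rw [h1, h2, h3]; try ring
    have hchain : v y ^ (1+p) ≤ W y ^ (1+p) := by
      rw [← hpdey, hWpow]
      have hstep1 : lap v y ≤ cε*A*S*d^(-q-2) := by
        calc lap v y ≤ cε*A*q*((q+1)*d^(-q-2)*(4*s0) + d^(-q-1)*(2*n)) := hlap
          _ = cε*A*q*(4*(q+1)*s0 + 2*n*d) * d^(-q-2) := by
              rw [hd1split]; ring
          _ ≤ cε*A*q*(4*(q+1)*R^2 + 2*n*R^2) * d^(-q-2) := by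
              apply mul_le_mul_of_nonneg_right _ hd2pos.le
              have hdR : d ≤ R^2 := by rw [hddef]; linarith
              have h4 : 4*(q+1)*s0 + 2*(n:ℝ)*d ≤ 4*(q+1)*R^2 + 2*n*R^2 := by
                have hn0 : (0:ℝ) ≤ (n:ℝ) := Nat.cast_nonneg n
                have a1 : 4*(q+1)*s0 ≤ 4*(q+1)*R^2 :=
                  mul_le_mul_of_nonneg_left hs0R.le (by linarith)
                have a2 : 2*(n:ℝ)*d ≤ 2*(n:ℝ)*R^2 :=
                  mul_le_mul_of_nonneg_left hdR (by linarith)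
                linarith
              exact mul_le_mul_of_nonneg_left h4 (mul_pos (mul_pos hcε hA0) hq).le
          _ = cε*A*S*d^(-q-2) := by rw [hSdef]; ring
      calc ε * lap v y ≤ ε * (cε*A*S*d^(-q-2)) := by
            apply mul_le_mul_of_nonneg_left hstep1 hε.le
        _ ≤ ε * (cε*A*(A^p)*d^(-q-2)) := by
            apply mul_le_mul_of_nonneg_left _ hε.le
            apply mul_le_mul_of_nonneg_right _ hd2pos.le
            exact mul_le_mul_of_nonneg_left hAp (mul_pos hcε hA0).le
        _ = ε * cε * (A * A^p) * d ^ (-q-2) := by ring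
    have hvWy : v y ≤ W y :=
      (Real.rpow_le_rpow_iff hvy.le hWypos.le (by linarith)).mp hchain
    linarith

/-- interior smallness. If `v_ε ∈ C^∞(closure Ω)` is the positive solution of
`ε Δv = v^{1+p}` in `Ω`, `v = b` on `∂Ω`, then for any compact `K ⊂ Ω` there is `C_K > 0`
independent of `ε` such that `max_K v_ε ≤ C_K ε^{1/p}` for all sufficiently small `ε > 0`. -/
theorem statement_6
    {n : ℕ} (hn : 1 ≤ n)
    (Ω : Set (EuclideanSpace ℝ (Fin n)))
    (hΩopen : IsOpen Ω) (hΩbdd : Bornology.IsBounded Ω) (hΩne : Ω.Nonempty)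
    (b p : ℝ) (hb : 0 < b) (hp : 0 < p)
    (v : ℝ → EuclideanSpace ℝ (Fin n) → ℝ)
    (hv : ∀ ε, 0 < ε → IsLocalSol Ω ε p b (v ε))
    (hvsmooth : ∀ ε, 0 < ε → ContDiffOn ℝ (⊤ : ℕ∞) (v ε) (closure Ω)) :
    ∀ K : Set (EuclideanSpace ℝ (Fin n)), IsCompact K → K ⊆ Ω →
      ∃ CK > (0:ℝ), ∃ ε₀ > (0:ℝ), ∀ ε, 0 < ε → ε < ε₀ →
        ∀ x ∈ K, v ε x ≤ CK * ε ^ (1 / p) := by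
  intro K hK hKΩ
  obtain ⟨δ, hδpos, hδsub⟩ := hK.exists_thickening_subset_open hΩopen hKΩ
  set R : ℝ := δ/2 with hRdef
  have hR : 0 < R := by positivity
  have hballs : ∀ x ∈ K, closedBall x R ⊆ Ω := by
    intro x hx
    refine (subset_trans ?_ hδsub)
    intro y hy
    rw [Metric.mem_thickening_iff]
    have h1 : dist y x ≤ R := by rwa [mem_closedBall] at hy
    exact ⟨x, hx, lt_of_le_of_lt h1 (by rw [hRdef]; linarith)⟩
  refine ⟨(max 1 ((2/p * R^2 * (4*(2/p)+4+2*n)) ^ (1/p))) * (R^2) ^ (-(2/p)), ?_, 1,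
    one_pos, ?_⟩
  · have h1 : (0:ℝ) < (R^2) ^ (-(2/p)) := Real.rpow_pos_of_pos (by positivity) _
    have h2 : (1:ℝ) ≤ max 1 ((2/p * R^2 * (4*(2/p)+4+2*n)) ^ (1/p)) := le_max_left _ _
    nlinarith
  · intro ε hε _ x hx
    have := key_estimate hΩopen hε hp (hv ε hε) hR (hballs x hx)
    exact this
end
end
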